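/- Let Ω be any planar Jordan domain and let φ : [0,∞) → [0,∞) be a homeomorphism with φ(0) = 0 and liminf_{t→0} φ(t)/t = 0. Then the surface Σ(Ω,φ) is not λ-linearly locally connected for any λ ≥ 1; in particular Σ(Ω, t^α) is not linearly locally connected for any α > 1. -/

import Mathlib

open Metric Set MeasureTheory

noncomputable section

/-- The Euclidean plane. -/
abbrev E2 : Type := EuclideanSpace ℝ (Fin 2)
/-- Euclidean three-space. -/
abbrev E3 : Type := EuclideanSpace ℝ (Fin 3)

/-- Build a point of ℝ³ from a planar point and a height. -/
def mk3 (x : E2) (z : ℝ) : E3 := (WithLp.equiv 2 (Fin 3 → ℝ)).symm ![x 0, x 1, z]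

/-- A Jordan curve: the image of the unit circle under a continuous injection
(equivalently, a topological embedding, by compactness of the circle). -/
def IsJordanCurve (Γ : Set E2) : Prop :=
  ∃ f : E2 → E2, ContinuousOn f (sphere 0 1) ∧ InjOn f (sphere 0 1) ∧ f '' (sphere 0 1) = Γ

/-- A Jordan domain: a bounded domain whose boundary is a Jordan curve. -/
def IsJordanDomain (Ω : Set E2) : Prop :=
  IsOpen Ω ∧ IsConnected Ω ∧ Bornology.IsBounded Ω ∧ IsJordanCurve (frontier Ω)

/-- The ε-level set γ_ε = {x ∈ Ω : dist(x,∂Ω) = ε}, with the convention γ₀ = ∂Ω. -/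
def levelSet (Ω : Set E2) (ε : ℝ) : Set E2 :=
  if ε = 0 then frontier Ω else {x ∈ Ω | infDist x (frontier Ω) = ε}

/-- The double-dome-like surface Σ(Ω,φ). -/
def domeSurface (Ω : Set E2) (φ : ℝ → ℝ) : Set E3 :=
  {p | ∃ x ∈ closure Ω, p = mk3 x (φ (infDist x (frontier Ω))) ∨
                        p = mk3 x (-φ (infDist x (frontier Ω)))}

/-- The class 𝓕 of gauges: homeomorphisms φ of [0,∞) onto [0,∞) with φ(0)=0,
liminf_{t→0} φ(t)/t > 0, and φ Lipschitz on [r,∞) for every r > 0. -/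
structure GaugeF (φ : ℝ → ℝ) : Prop where
  continuousOn : ContinuousOn φ (Ici 0)
  strictMonoOn : StrictMonoOn φ (Ici 0)
  surjOn : SurjOn φ (Ici 0) (Ici 0)
  map_zero : φ 0 = 0
  liminf_pos : ∃ m > (0:ℝ), ∀ᶠ t in nhdsWithin 0 (Ioi 0), m * t ≤ φ t
  lipschitzOn : ∀ r > (0:ℝ), ∃ L : NNReal, LipschitzOnWith L φ (Ici r)

/-- A subarc of Γ with endpoints x and y: a subset of Γ that is a simple arc from x to y. -/
def IsSubarc (Γ A : Set E2) (x y : E2) : Prop :=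
  A ⊆ Γ ∧ ∃ f : ℝ → E2, ContinuousOn f (Icc 0 1) ∧ InjOn f (Icc 0 1) ∧
    f 0 = x ∧ f 1 = y ∧ f '' (Icc 0 1) = A

/-- The 2-point condition with constant C: for any two points of Γ, some subarc joining
them (hence the one of smaller diameter) has diameter at most C·|x−y|. -/
def TwoPointCondition (Γ : Set E2) (C : ℝ) : Prop :=
  ∀ x ∈ Γ, ∀ y ∈ Γ, x ≠ y →
    ∃ A, IsSubarc Γ A x y ∧ Metric.diam A ≤ C * dist x y

/-- A c-chord-arc curve: a rectifiable Jordan curve such that for any two points, the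
shorter subarc joining them has length (1-dimensional Hausdorff measure) at most c·|x−y|. -/
def IsChordArc (Γ : Set E2) (c : ℝ) : Prop :=
  IsJordanCurve Γ ∧ μH[1] Γ < ⊤ ∧
  ∀ x ∈ Γ, ∀ y ∈ Γ, x ≠ y →
    ∃ A, IsSubarc Γ A x y ∧ μH[1] A ≤ ENNReal.ofReal (c * dist x y)

/-- The λ-LLC₁ condition. -/
def LLC1With {X : Type*} [MetricSpace X] (S : Set X) (lam : ℝ) : Prop :=
  ∀ x ∈ S, ∀ r > (0:ℝ), ∀ y₁ ∈ ball x r ∩ S, ∀ y₂ ∈ ball x r ∩ S,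
    ∃ E ⊆ ball x (lam * r) ∩ S, IsCompact E ∧ IsConnected E ∧ y₁ ∈ E ∧ y₂ ∈ E

/-- The λ-LLC₂ condition. -/
def LLC2With {X : Type*} [MetricSpace X] (S : Set X) (lam : ℝ) : Prop :=
  ∀ x ∈ S, ∀ r > (0:ℝ), ∀ y₁ ∈ S \ ball x r, ∀ y₂ ∈ S \ ball x r,
    ∃ E ⊆ S \ ball x (r / lam), IsCompact E ∧ IsConnected E ∧ y₁ ∈ E ∧ y₂ ∈ E

/-- λ-linear local connectivity. -/
def LLCWith {X : Type*} [MetricSpace X] (S : Set X) (lam : ℝ) : Prop :=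
  LLC1With S lam ∧ LLC2With S lam

/-- S (with the Euclidean metric of ℝ³) is quasisymmetric to the unit sphere S²:
there are a homeomorphism η of [0,∞) onto itself and an η-quasisymmetric
homeomorphism of S onto the unit sphere. -/
def QSEquivSphere (S : Set E3) : Prop :=
  ∃ η : ℝ → ℝ, (ContinuousOn η (Ici 0) ∧ StrictMonoOn η (Ici 0) ∧ SurjOn η (Ici 0) (Ici 0)) ∧
  ∃ f : S → (sphere (0:E3) 1 : Set E3), Function.Bijective f ∧
    ∀ (x a b : S) (t : ℝ), 0 < t → dist (x:E3) a ≤ t * dist (x:E3) b →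
      dist (f x : E3) (f a) ≤ η t * dist (f x : E3) (f b)

/-- The level chord-arc property. -/
def LevelChordArc (Ω : Set E2) : Prop :=
  ∃ ε₀ > (0:ℝ), ∃ c > (1:ℝ), ∀ ε, 0 ≤ ε → ε ≤ ε₀ → IsChordArc (levelSet Ω ε) c

/-- The level quasicircle property. -/
def LevelQuasicircle (Ω : Set E2) : Prop :=
  ∃ ε₀ > (0:ℝ), ∃ C > (1:ℝ), ∀ ε, 0 ≤ ε → ε ≤ ε₀ →
    IsJordanCurve (levelSet Ω ε) ∧ TwoPointCondition (levelSet Ω ε) C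

/-!
Above a point `p ∈ cl Ω` at distance `d` from `∂Ω` the two points `(p, ±φ(d))` of `Σ(Ω,φ)` are
`2φ(d)` apart, while every continuum in `Σ(Ω,φ)` joining them crosses the height `0`, i.e. passes
over `∂Ω`, and so leaves the ball of radius `d` around `p`. Since `φ(d)/d` is arbitrarily small
for suitable small `d`, LLC₁ fails for every constant.
-/

open Filter Topology

lemma mk3_apply_two (x : E2) (z : ℝ) : mk3 x z 2 = z := by simp [mk3]

lemma dist_mk3_mk3_same (x : E2) (a b : ℝ) : dist (mk3 x a) (mk3 x b) = |a - b| := by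
  simp [EuclideanSpace.dist_eq, mk3, Fin.sum_univ_three, Real.dist_eq, Real.sqrt_sq_eq_abs]

lemma dist_le_dist_mk3 (x y : E2) (a b : ℝ) : dist x y ≤ dist (mk3 x a) (mk3 y b) := by
  simp only [EuclideanSpace.dist_eq, mk3, WithLp.equiv_symm_apply, Fin.sum_univ_three,
    Fin.sum_univ_two, Matrix.cons_val_zero, Matrix.cons_val_one]
  exact Real.sqrt_le_sqrt (le_add_of_nonneg_right (sq_nonneg _))

lemma infDist_frontier_le_dist_of_apply_two_eq_zero {Ω : Set E2} {φ : ℝ → ℝ}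
    (hφ : InjOn φ (Ici 0)) (h0 : φ 0 = 0) {q : E3} (hq : q ∈ domeSurface Ω φ) (hq2 : q 2 = 0)
    (x : E2) (z : ℝ) : infDist x (frontier Ω) ≤ dist q (mk3 x z) := by
  obtain ⟨w, -, hw⟩ := hq
  have hφw : φ (infDist w (frontier Ω)) = 0 := by
    rcases hw with rfl | rfl <;> simpa [mk3_apply_two] using hq2
  have hwF : infDist w (frontier Ω) = 0 :=
    hφ infDist_nonneg self_mem_Ici (hφw.trans h0.symm)
  calc infDist x (frontier Ω) ≤ infDist w (frontier Ω) + dist x w := infDist_le_infDist_add_dist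
    _ = dist w x := by rw [hwF, zero_add, dist_comm]
    _ ≤ dist q (mk3 x z) := by rcases hw with rfl | rfl <;> exact dist_le_dist_mk3 _ _ _ _

lemma not_LLC1With_domeSurface {Ω : Set E2} {φ : ℝ → ℝ} (hφ : InjOn φ (Ici 0)) (h0 : φ 0 = 0)
    {p : E2} (hp : p ∈ closure Ω) (hφp : 0 ≤ φ (infDist p (frontier Ω))) {lam r : ℝ}
    (hr : 2 * φ (infDist p (frontier Ω)) < r) (hlam : lam * r ≤ infDist p (frontier Ω)) :
    ¬ LLC1With (domeSurface Ω φ) lam := by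
  set z := φ (infDist p (frontier Ω))
  have hy₁ : mk3 p z ∈ domeSurface Ω φ := ⟨p, hp, Or.inl rfl⟩
  have hy₂ : mk3 p (-z) ∈ domeSurface Ω φ := ⟨p, hp, Or.inr rfl⟩
  have h12 : dist (mk3 p (-z)) (mk3 p z) < r := by
    rw [dist_mk3_mk3_same, abs_of_nonpos (by linarith)]; linarith
  intro hLLC
  obtain ⟨E, hES, -, hE, hy₁E, hy₂E⟩ := hLLC _ hy₁ r (by linarith) _
    ⟨mem_ball_self (by linarith), hy₁⟩ _ ⟨h12, hy₂⟩
  obtain ⟨q, hqE, hq2⟩ := hE.isPreconnected.intermediate_value hy₂E hy₁E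
    (by fun_prop : Continuous fun v : E3 => v 2).continuousOn
    (show (0 : ℝ) ∈ Icc (mk3 p (-z) 2) (mk3 p z 2) by
      rw [mk3_apply_two, mk3_apply_two]; constructor <;> linarith)
  have hfar := infDist_frontier_le_dist_of_apply_two_eq_zero hφ h0 (hES hqE).2 hq2 p z
  have hnear := mem_ball.1 (hES hqE).1
  linarith

lemma exists_mem_closure_infDist_frontier_eq {F : Type*} [NormedAddCommGroup F] [NormedSpace ℝ F]
    [Nontrivial F] {Ω : Set F} (hopen : IsOpen Ω) (hconn : IsConnected Ω)
    (hbdd : Bornology.IsBounded Ω) :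
    ∃ δ > 0, ∀ d ∈ Icc 0 δ, ∃ p ∈ closure Ω, infDist p (frontier Ω) = d := by
  have hF : (frontier Ω).Nonempty := nonempty_frontier_iff.2
    ⟨hconn.nonempty, fun h => NormedSpace.unbounded_univ ℝ F (h ▸ hbdd)⟩
  obtain ⟨p₀, hp₀⟩ := hconn.nonempty
  obtain ⟨w, hw⟩ := hF
  refine ⟨infDist p₀ (frontier Ω), ?_, fun d hd => ?_⟩
  · exact (isClosed_frontier.notMem_iff_infDist_pos ⟨w, hw⟩).1
      fun h => (disjoint_frontier_iff_isOpen.2 hopen).le_bot ⟨h, hp₀⟩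
  · have := hconn.closure.isPreconnected.intermediate_value (frontier_subset_closure hw)
      (subset_closure hp₀) (continuous_infDist_pt (frontier Ω)).continuousOn
    rw [infDist_zero_of_mem hw] at this
    exact this hd

lemma not_LLCWith_domeSurface {Ω : Set E2} (hopen : IsOpen Ω) (hconn : IsConnected Ω)
    (hbdd : Bornology.IsBounded Ω) {φ : ℝ → ℝ} (hmono : StrictMonoOn φ (Ici 0)) (h0 : φ 0 = 0)
    (hliminf : ∀ m > (0:ℝ), ∃ᶠ t in 𝓝[>] 0, φ t < m * t) {lam : ℝ} (hlam : 0 < lam) :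
    ¬ LLCWith (domeSurface Ω φ) lam := by
  obtain ⟨δ, hδ, hlevel⟩ := exists_mem_closure_infDist_frontier_eq hopen hconn hbdd
  obtain ⟨d, hφd, hd⟩ :=
    ((hliminf (2 * lam)⁻¹ (by positivity)).and_eventually (Ioo_mem_nhdsGT hδ)).exists
  obtain ⟨p, hp, rfl⟩ := hlevel d (Ioo_subset_Icc_self hd)
  have hφ_nonneg : 0 ≤ φ (infDist p (frontier Ω)) :=
    h0 ▸ hmono.monotoneOn self_mem_Ici (mem_Ici.2 hd.1.le) hd.1.le
  refine fun hLLC => not_LLC1With_domeSurface hmono.injOn h0 hp hφ_nonneg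
    (r := infDist p (frontier Ω) / lam) ?_ (mul_div_cancel₀ _ hlam.ne').le hLLC.1
  calc 2 * φ (infDist p (frontier Ω)) < 2 * ((2 * lam)⁻¹ * infDist p (frontier Ω)) := by
        gcongr
    _ = infDist p (frontier Ω) / lam := by field_simp

lemma eventually_rpow_lt_mul {α : ℝ} (hα : 1 < α) {m : ℝ} (hm : 0 < m) :
    ∀ᶠ t in 𝓝[>] (0 : ℝ), t ^ α < m * t := by
  have hα' : 0 < α - 1 := sub_pos.2 hα
  have htend : Tendsto (fun t : ℝ => t ^ (α - 1)) (𝓝[>] 0) (𝓝 0) := by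
    simpa [Real.zero_rpow hα'.ne'] using
      (Real.continuousAt_rpow_const 0 _ (Or.inr hα'.le)).tendsto.mono_left nhdsWithin_le_nhds
  filter_upwards [htend.eventually (eventually_lt_nhds hm), self_mem_nhdsWithin]
    with t ht (ht0 : 0 < t)
  calc t ^ α = t ^ (α - 1) * t := by rw [← Real.rpow_add_one ht0.ne', sub_add_cancel]
    _ < m * t := mul_lt_mul_of_pos_right ht ht0

theorem stmt18_general (Ω : Set E2) (hΩ : IsJordanDomain Ω) (φ : ℝ → ℝ)
    (hmono : StrictMonoOn φ (Ici 0)) (h0 : φ 0 = 0)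
    (hliminf : ∀ m > (0:ℝ), ∃ᶠ t in nhdsWithin 0 (Ioi 0), φ t < m * t) :
    (∀ lam : ℝ, 1 ≤ lam → ¬ LLCWith (domeSurface Ω φ) lam) ∧
    (∀ α : ℝ, 1 < α → ∀ lam : ℝ, 1 ≤ lam →
      ¬ LLCWith (domeSurface Ω (fun t => t ^ α)) lam) := by
  obtain ⟨hopen, hconn, hbdd, -⟩ := hΩ
  refine ⟨fun lam hlam => not_LLCWith_domeSurface hopen hconn hbdd hmono h0 hliminf (by linarith),
    fun α hα lam hlam => ?_⟩
  exact not_LLCWith_domeSurface hopen hconn hbdd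
    (Real.strictMonoOn_rpow_Ici_of_exponent_pos (by linarith))
    (Real.zero_rpow (by linarith)) (fun m hm => (eventually_rpow_lt_mul hα hm).frequently)
    (by linarith)

/-- If liminf_{t→0} φ(t)/t = 0, then Σ(Ω,φ) is not λ-LLC for any λ ≥ 1; in particular
Σ(Ω,t^α) is not LLC for α > 1. -/
theorem stmt18 (Ω : Set E2) (hΩ : IsJordanDomain Ω) (φ : ℝ → ℝ)
    (hcont : ContinuousOn φ (Ici 0)) (hmono : StrictMonoOn φ (Ici 0))
    (hsurj : SurjOn φ (Ici 0) (Ici 0)) (h0 : φ 0 = 0)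
    (hliminf : ∀ m > (0:ℝ), ∃ᶠ t in nhdsWithin 0 (Ioi 0), φ t < m * t) :
    (∀ lam : ℝ, 1 ≤ lam → ¬ LLCWith (domeSurface Ω φ) lam) ∧
    (∀ α : ℝ, 1 < α → ∀ lam : ℝ, 1 ≤ lam →
      ¬ LLCWith (domeSurface Ω (fun t => t ^ α)) lam) :=
  stmt18_general Ω hΩ φ hmono h0 hliminf
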